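/- For the triangle graph two-particle system, the value of T(φ₁,φ₂) = α₁cos φ₁ - α₂cos φ₂ - α₃cos(φ₁-φ₂) at its interior stationary point (where ∂T/∂φ₁ = ∂T/∂φ₂ = 0 with sin φ₁ ≠ 0) equals -(α₁α₃/(2α₂) + α₂α₃/(2α₁) + α₁α₂/(2α₃)); in particular, if α₁ = √((1-ρ₁)(1-ρ₃)), α₂ = √((1-ρ₁)(1-ρ₂)), α₃ = √((1-ρ₂)(1-ρ₃)) with ρ₁+ρ₂+ρ₃ = 2 and all 0 < ρ_i < 1, this stationary value is -1/2. -/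

import Mathlib

open Real

/-!
The stationarity equations say `α₁ sin A = α₂ sin B = α₃ sin C` for the angles
`A = π - φ₁`, `B = φ₂`, `C = φ₁ - φ₂`, which sum to `π`: a law of sines for a triangle with sides
proportional to `1/α₁, 1/α₂, 1/α₃`. Expanding `sin A = sin (B + C)` gives the projection formulas
`1/α₁ = cos C/α₂ + cos B/α₃` (and cyclically), and a suitable sum of the three of them evaluates
`α₁ cos A + α₂ cos B + α₃ cos C`, which is `-T(φ₁, φ₂)`.
-/

lemma mul_eq_mul_cos_add_mul_cos_of_sine_law {A B C a b c k : ℝ} (hABC : A + B + C = π)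
    (ha : a * sin A = k) (hb : b * sin B = k) (hc : c * sin C = k) (hk : k ≠ 0) :
    b * c = a * c * cos C + a * b * cos B := by
  have hsinA : sin A = sin B * cos C + cos B * sin C := by
    rw [← sin_add, ← sin_pi_sub]
    congr 1
    linarith
  apply mul_left_cancel₀ hk
  linear_combination (-b * c) * ha + (a * c * cos C) * hb + (a * b * cos B) * hc
    + (a * b * c) * hsinA

lemma sum_mul_cos_of_sine_law {A B C a b c : ℝ} (hABC : A + B + C = π)
    (hab : a * sin A = b * sin B) (hbc : b * sin B = c * sin C) (hA : a * sin A ≠ 0)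
    (ha : a ≠ 0) (hb : b ≠ 0) (hc : c ≠ 0) :
    a * cos A + b * cos B + c * cos C = (b * c / a + c * a / b + a * b / c) / 2 := by
  have projA : b * c = a * c * cos C + a * b * cos B :=
    mul_eq_mul_cos_add_mul_cos_of_sine_law hABC rfl hab.symm (hab.trans hbc).symm hA
  have projB : c * a = b * a * cos A + b * c * cos C :=
    mul_eq_mul_cos_add_mul_cos_of_sine_law (by linarith) hab.symm (hab.trans hbc).symm rfl hA
  have projC : a * b = c * b * cos B + c * a * cos A :=
    mul_eq_mul_cos_add_mul_cos_of_sine_law (by linarith) (hab.trans hbc).symm rfl hab.symm hA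
  field_simp
  linear_combination (-b * c) * projA - (c * a) * projB - (a * b) * projC

lemma sqrt_mul_sqrt_div_sqrt_eq {x y z r : ℝ} (hx : 0 ≤ x) (hz : 0 < z) (hr : 0 ≤ r)
    (h : x * y = z * r ^ 2) : √x * √y / √z = r := by
  rw [← sqrt_mul hx, h, sqrt_mul hz.le, sqrt_sq hr, mul_div_cancel_left₀ _ (sqrt_pos.2 hz).ne']

theorem triangle_stationary_value (α₁ α₂ α₃ φ₁ φ₂ : ℝ)
    (hα₁ : 0 < α₁) (hα₂ : 0 < α₂) (hα₃ : 0 < α₃)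
    (hs1 : α₁ * sin φ₁ = α₃ * sin (φ₁ - φ₂))
    (hs2 : α₂ * sin φ₂ = α₃ * sin (φ₁ - φ₂))
    (hsin : sin φ₁ ≠ 0) :
    (α₁ * cos φ₁ - α₂ * cos φ₂ - α₃ * cos (φ₁ - φ₂) =
      -(α₁ * α₃ / (2 * α₂) + α₂ * α₃ / (2 * α₁) + α₁ * α₂ / (2 * α₃))) ∧
    (∀ ρ₁ ρ₂ ρ₃ : ℝ, 0 < ρ₁ → ρ₁ < 1 → 0 < ρ₂ → ρ₂ < 1 → 0 < ρ₃ → ρ₃ < 1 →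
      ρ₁ + ρ₂ + ρ₃ = 2 →
      α₁ = Real.sqrt ((1 - ρ₁) * (1 - ρ₃)) →
      α₂ = Real.sqrt ((1 - ρ₁) * (1 - ρ₂)) →
      α₃ = Real.sqrt ((1 - ρ₂) * (1 - ρ₃)) →
      -(α₁ * α₃ / (2 * α₂) + α₂ * α₃ / (2 * α₁) + α₁ * α₂ / (2 * α₃)) = -(1 / 2)) := by
  constructor
  · have hcos := sum_mul_cos_of_sine_law (A := π - φ₁) (B := φ₂) (C := φ₁ - φ₂) (by ring)
      (by rw [sin_pi_sub, hs1, hs2]) hs2 (by rw [sin_pi_sub]; exact mul_ne_zero hα₁.ne' hsin)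
      hα₁.ne' hα₂.ne' hα₃.ne'
    rw [cos_pi_sub] at hcos
    linear_combination -hcos
  · intro ρ₁ ρ₂ ρ₃ _ hρ₁ _ hρ₂ _ hρ₃ hρ hA₁ hA₂ hA₃
    subst hA₁ hA₂ hA₃
    have e₁ := sqrt_mul_sqrt_div_sqrt_eq (x := (1 - ρ₁) * (1 - ρ₃)) (y := (1 - ρ₂) * (1 - ρ₃))
      (z := (1 - ρ₁) * (1 - ρ₂)) (r := 1 - ρ₃) (by nlinarith) (by nlinarith) (by linarith) (by ring)
    have e₂ := sqrt_mul_sqrt_div_sqrt_eq (x := (1 - ρ₁) * (1 - ρ₂)) (y := (1 - ρ₂) * (1 - ρ₃))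
      (z := (1 - ρ₁) * (1 - ρ₃)) (r := 1 - ρ₂) (by nlinarith) (by nlinarith) (by linarith) (by ring)
    have e₃ := sqrt_mul_sqrt_div_sqrt_eq (x := (1 - ρ₁) * (1 - ρ₃)) (y := (1 - ρ₁) * (1 - ρ₂))
      (z := (1 - ρ₂) * (1 - ρ₃)) (r := 1 - ρ₁) (by nlinarith) (by nlinarith) (by linarith) (by ring)
    linear_combination (-1 / 2 : ℝ) * (e₁ + e₂ + e₃) + (1 / 2 : ℝ) * hρ
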